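/- For every non-negative integer n and all x, y ∈ [−1/2, 1/2], the n-th Legendre polynomial satisfies |P_n(x) − P_n(y)| ≤ 4·√n·|x − y|. -/

import Mathlib

/-!
By the mean value theorem it suffices to bound `P_n' = D^{n+1}[(x² − 1)ⁿ] / (2ⁿ n!)` on
`[-1/2, 1/2]`. Cauchy's estimate on the circle `z = x + s e^{iθ}` with `s = √(1 − x²)`, on which
`|z² − 1| = 2s √(1 − s² + s² sin² θ)`, bounds it by
`(n + 1)/(2π s) ∫₀^{2π} (1 − s² + s² sin² θ)^m dθ` with `m = ⌊n/2⌋`. Expanding binomially, this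
integral is `2π 𝔼[w_K]` for `K ~ Bin(m, s²)` and the Wallis products
`w_k = ∏_{i<k} (2i+1)/(2i+2) ≤ 1/√(k+1)`; Jensen's inequality for `√` together with
`𝔼[1/(K+1)] ≤ 1/((m+1)s²)` bounds it by `2π/(s √(m+1))`, which is `O(1/√n)`.
-/

/-- The `n`-th Legendre polynomial, via Rodrigues' formula
`P_n(x) = (1/(2ⁿ·n!)) · dⁿ/dxⁿ[(x² − 1)ⁿ]`. -/
noncomputable def legendre (n : ℕ) (x : ℝ) : ℝ :=
  (1 / ((2 : ℝ) ^ n * n.factorial)) * iteratedDeriv n (fun y : ℝ => (y ^ 2 - 1) ^ n) x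

open Real Finset Metric

theorem prod_two_mul_add_one_div_le_inv_sqrt (k : ℕ) :
    ∏ i ∈ range k, (2 * (i : ℝ) + 1) / (2 * i + 2) ≤ (√(k + 1))⁻¹ := by
  induction k with
  | zero => simp
  | succ k ih =>
    have hstep : (2 * (k : ℝ) + 1) / (2 * k + 2) ≤ √(k + 1) / √(k + 1 + 1) := by
      rw [← sqrt_div (by positivity), le_sqrt' (by positivity), div_pow,
        div_le_div_iff₀ (by positivity) (by positivity)]
      nlinarith
    calc ∏ i ∈ range (k + 1), (2 * (i : ℝ) + 1) / (2 * i + 2)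
        ≤ (√(k + 1))⁻¹ * (√(k + 1) / √(k + 1 + 1)) := by
          rw [prod_range_succ]; gcongr
      _ = (√((k + 1 : ℕ) + 1))⁻¹ := by
          push_cast; field_simp

theorem integral_sin_pow_even_zero_two_pi (k : ℕ) :
    ∫ θ in 0..2 * π, sin θ ^ (2 * k) =
      2 * π * ∏ i ∈ range k, (2 * (i : ℝ) + 1) / (2 * i + 2) := by
  have hper : Function.Periodic (fun θ => sin θ ^ (2 * k)) π := fun θ => by
    simp [sin_add_pi, (even_two_mul k).neg_pow]
  have := hper.intervalIntegral_add_eq_add 0 π fun _ _ =>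
    (by fun_prop : Continuous _).intervalIntegrable _ _
  rw [zero_add, ← two_mul] at this
  rw [this, integral_sin_pow_even]
  ring

theorem integral_sin_pow_even_zero_two_pi_le (k : ℕ) :
    ∫ θ in 0..2 * π, sin θ ^ (2 * k) ≤ 2 * π / √(k + 1) := by
  rw [integral_sin_pow_even_zero_two_pi, div_eq_mul_inv]
  gcongr
  exact prod_two_mul_add_one_div_le_inv_sqrt k

theorem sum_choose_mul_pow_div_succ (a b : ℝ) (m : ℕ) :
    (m + 1) * a * ∑ k ∈ range (m + 1), m.choose k * a ^ k * b ^ (m - k) / (k + 1) =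
      (a + b) ^ (m + 1) - b ^ (m + 1) := by
  conv_rhs => rw [add_pow, sum_range_succ']
  simp only [pow_zero, one_mul, Nat.sub_zero, Nat.choose_zero_right, Nat.cast_one, mul_one,
    add_sub_cancel_right, mul_sum]
  refine sum_congr rfl fun k _ => ?_
  have hchoose : ((m : ℝ) + 1) * m.choose k = (m + 1).choose (k + 1) * (k + 1) := by
    exact_mod_cast Nat.add_one_mul_choose_eq m k
  rw [Nat.add_sub_add_right]
  field_simp
  linear_combination a ^ (k + 1) * b ^ (m - k) * hchoose

section Binomial

variable {q : ℝ} (hq0 : 0 < q) (hq1 : q ≤ 1) (m : ℕ)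
include hq0 hq1

theorem sum_binomial_div_succ_le :
    ∑ k ∈ range (m + 1), m.choose k * q ^ k * (1 - q) ^ (m - k) / (k + 1) ≤
      1 / ((m + 1) * q) := by
  rw [le_div_iff₀' (by positivity), sum_choose_mul_pow_div_succ, add_sub_cancel, one_pow]
  exact sub_le_self _ (pow_nonneg (sub_nonneg.2 hq1) _)

theorem sum_binomial_div_sqrt_succ_le :
    ∑ k ∈ range (m + 1), m.choose k * q ^ k * (1 - q) ^ (m - k) / √(k + 1) ≤
      1 / √((m + 1) * q) := by
  have hw : ∀ k ∈ range (m + 1), 0 ≤ m.choose k * q ^ k * (1 - q) ^ (m - k) := fun k _ => by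
    have := sub_nonneg.2 hq1; positivity
  have hsum : ∑ k ∈ range (m + 1), m.choose k * q ^ k * (1 - q) ^ (m - k) = 1 := by
    calc _ = (q + (1 - q)) ^ m := by rw [add_pow]; exact sum_congr rfl fun k _ => by ring
      _ = 1 := by rw [add_sub_cancel, one_pow]
  have jensen := strictConcaveOn_sqrt.concaveOn.le_map_sum hw hsum
    (p := fun k : ℕ => 1 / ((k : ℝ) + 1)) fun k _ => Set.mem_Ici.2 (by positivity)
  simp only [smul_eq_mul, one_div, sqrt_inv, ← div_eq_mul_inv] at jensen
  calc _ ≤ _ := jensen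
    _ ≤ √(1 / ((m + 1) * q)) := sqrt_le_sqrt (sum_binomial_div_succ_le hq0 hq1 m)
    _ = 1 / √((m + 1) * q) := by rw [one_div, sqrt_inv, one_div]

theorem integral_one_sub_add_mul_sin_sq_pow_le :
    ∫ θ in 0..2 * π, (1 - q + q * sin θ ^ 2) ^ m ≤ 2 * π / √((m + 1) * q) := by
  set w : ℕ → ℝ := fun k => m.choose k * q ^ k * (1 - q) ^ (m - k)
  have hw : ∀ k, 0 ≤ w k := fun k => by have := sub_nonneg.2 hq1; positivity
  have hexpand : ∀ θ, (1 - q + q * sin θ ^ 2) ^ m =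
      ∑ k ∈ range (m + 1), w k * sin θ ^ (2 * k) := fun θ => by
    rw [add_comm, add_pow]
    exact sum_congr rfl fun k _ => by ring
  simp_rw [hexpand]
  rw [intervalIntegral.integral_finsetSum fun k _ =>
    (by fun_prop : Continuous _).intervalIntegrable _ _]
  calc ∑ k ∈ range (m + 1), ∫ θ in 0..2 * π, w k * sin θ ^ (2 * k)
      ≤ ∑ k ∈ range (m + 1), w k * (2 * π / √(k + 1)) := by
        gcongr with k
        rw [intervalIntegral.integral_const_mul]
        exact mul_le_mul_of_nonneg_left (integral_sin_pow_even_zero_two_pi_le k) (hw k)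
    _ = 2 * π * ∑ k ∈ range (m + 1), w k / √(k + 1) := by
        rw [mul_sum]; exact sum_congr rfl fun k _ => by ring
    _ ≤ 2 * π * (1 / √((m + 1) * q)) := by
        gcongr; exact sum_binomial_div_sqrt_succ_le hq0 hq1 m
    _ = 2 * π / √((m + 1) * q) := by ring

end Binomial

theorem norm_iteratedDeriv_le_integral_norm_circleMap {E : Type*} [NormedAddCommGroup E]
    [NormedSpace ℂ E] [CompleteSpace E] {f : ℂ → E} {c : ℂ} {R : ℝ} (n : ℕ) (hR : 0 < R)
    (hf : DiffContOnCl ℂ f (ball c R)) :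
    ‖iteratedDeriv n f c‖ ≤
      n.factorial * ((2 * π)⁻¹ * ∫ θ in 0..2 * π, ‖f (circleMap c R θ)‖) / R ^ n := by
  have hps := (hf.hasFPowerSeriesOnBall (R := ⟨R, hR.le⟩) hR).factorial_smul 1 n
  rw [iteratedFDeriv_apply_eq_iteratedDeriv_mul_prod, prod_const_one, one_smul] at hps
  rw [← hps, ← Nat.cast_smul_eq_nsmul ℝ, norm_smul, norm_natCast, mul_div_assoc]
  gcongr
  calc _ ≤ ‖cauchyPowerSeries f c R n‖ * ∏ _ : Fin n, ‖(1 : ℂ)‖ :=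
        ContinuousMultilinearMap.le_opNorm _ _
    _ ≤ _ := by
        simpa [abs_of_pos hR, div_eq_mul_inv] using norm_cauchyPowerSeries_le f c R n

theorem iteratedDeriv_ofReal_eq_ofReal_iteratedDeriv {F : ℂ → ℂ} {f : ℝ → ℝ}
    (hF : Differentiable ℂ F) (hf : ContDiff ℝ ⊤ f) (hFf : ∀ y : ℝ, F y = f y) (k : ℕ) (y : ℝ) :
    iteratedDeriv k F y = iteratedDeriv k f y := by
  induction k generalizing y with
  | zero => simpa using hFf y
  | succ k ih =>
    have hC : HasDerivAt (fun t : ℝ => iteratedDeriv k F t) (iteratedDeriv (k + 1) F y) y := by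
      rw [iteratedDeriv_succ]
      exact ((hF.contDiff (n := ⊤)).differentiable_iteratedDeriv k (WithTop.coe_lt_top _)
        |>.differentiableAt.hasDerivAt).comp_ofReal
    have hR : HasDerivAt (fun t : ℝ => ((iteratedDeriv k f t : ℝ) : ℂ))
        ((iteratedDeriv (k + 1) f y : ℝ) : ℂ) y := by
      rw [iteratedDeriv_succ]
      exact (hf.differentiable_iteratedDeriv k (WithTop.coe_lt_top _)
        |>.differentiableAt.hasDerivAt).ofReal_comp
    exact hC.unique (by simpa only [ih] using hR)

theorem norm_circleMap_sq_sub_one {x s : ℝ} (hs : 0 ≤ s) (hxs : x ^ 2 + s ^ 2 = 1) (θ : ℝ) :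
    ‖circleMap x s θ ^ 2 - 1‖ = 2 * s * √(1 - s ^ 2 + s ^ 2 * sin θ ^ 2) := by
  have hcs := Complex.cos_sq_add_sin_sq θ
  have hxs' : (x : ℂ) ^ 2 + (s : ℂ) ^ 2 = 1 := by exact_mod_cast hxs
  have hfactor : circleMap x s θ ^ 2 - 1 =
      Complex.exp (θ * Complex.I) * ((2 * s * x : ℝ) + (2 * s ^ 2 * sin θ : ℝ) * Complex.I) := by
    rw [circleMap, Complex.exp_mul_I]
    push_cast
    linear_combination hxs' + (s : ℂ) ^ 2 * hcs - (s : ℂ) ^ 2 * Complex.sin θ ^ 2 * Complex.I_sq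
  rw [hfactor, norm_mul, Complex.norm_exp_ofReal_mul_I, one_mul, Complex.norm_add_mul_I,
    show 1 - s ^ 2 = x ^ 2 by linarith,
    show (2 * s * x) ^ 2 + (2 * s ^ 2 * sin θ) ^ 2 = (2 * s) ^ 2 * (x ^ 2 + s ^ 2 * sin θ ^ 2) by
      ring,
    sqrt_mul (by positivity), sqrt_sq (by positivity)]

theorem sqrt_pow_le_pow_div_two {a : ℝ} (h0 : 0 ≤ a) (h1 : a ≤ 1) (n : ℕ) :
    √a ^ n ≤ a ^ (n / 2) :=
  calc √a ^ n ≤ √a ^ (2 * (n / 2)) :=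
        pow_le_pow_of_le_one (sqrt_nonneg a) (sqrt_le_one.2 h1) (Nat.mul_div_le n 2)
    _ = a ^ (n / 2) := by rw [pow_mul, sq_sqrt h0]

theorem integral_norm_circleMap_sq_sub_one_pow_le {x s : ℝ} (hs : 0 < s)
    (hxs : x ^ 2 + s ^ 2 = 1) (n : ℕ) :
    ∫ θ in 0..2 * π, ‖(circleMap x s θ ^ 2 - 1) ^ n‖ ≤
      (2 * s) ^ n * (2 * π / (s * √((n / 2 : ℕ) + 1))) := by
  have hs1 : s ^ 2 ≤ 1 := by nlinarith
  calc ∫ θ in 0..2 * π, ‖(circleMap x s θ ^ 2 - 1) ^ n‖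
      ≤ ∫ θ in 0..2 * π, (2 * s) ^ n * (1 - s ^ 2 + s ^ 2 * sin θ ^ 2) ^ (n / 2) := by
        refine intervalIntegral.integral_mono_on (by positivity)
          ((continuous_circleMap _ _).pow 2 |>.sub continuous_const |>.pow n |>.norm
            |>.intervalIntegrable _ _)
          ((by fun_prop : Continuous _).intervalIntegrable _ _) fun θ _ => ?_
        rw [norm_pow, norm_circleMap_sq_sub_one hs.le hxs, mul_pow]
        have hsin := sin_sq_le_one θ
        gcongr
        exact sqrt_pow_le_pow_div_two (by nlinarith) (by nlinarith) n
    _ = (2 * s) ^ n * ∫ θ in 0..2 * π, (1 - s ^ 2 + s ^ 2 * sin θ ^ 2) ^ (n / 2) :=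
        intervalIntegral.integral_const_mul _ _
    _ ≤ (2 * s) ^ n * (2 * π / √(((n / 2 : ℕ) + 1) * s ^ 2)) := by
        gcongr
        exact integral_one_sub_add_mul_sin_sq_pow_le (by positivity) hs1 _
    _ = (2 * s) ^ n * (2 * π / (s * √((n / 2 : ℕ) + 1))) := by
        rw [sqrt_mul (by positivity), sqrt_sq hs.le, mul_comm s]

theorem abs_iteratedDeriv_succ_sq_sub_one_pow_le {x : ℝ} (hx : x ^ 2 < 1) (n : ℕ) :
    |iteratedDeriv (n + 1) (fun y : ℝ => (y ^ 2 - 1) ^ n) x| ≤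
      2 ^ n * (n + 1).factorial / ((1 - x ^ 2) * √((n / 2 : ℕ) + 1)) := by
  set s := √(1 - x ^ 2)
  have hs : 0 < s := sqrt_pos.2 (by linarith)
  have hs2 : s ^ 2 = 1 - x ^ 2 := sq_sqrt (by linarith)
  have hcomplex := iteratedDeriv_ofReal_eq_ofReal_iteratedDeriv
    (F := fun z : ℂ => (z ^ 2 - 1) ^ n) (f := fun y : ℝ => (y ^ 2 - 1) ^ n)
    (by fun_prop) (by fun_prop) (fun y => by push_cast; rfl) (n + 1) x
  rw [← Real.norm_eq_abs, ← Complex.norm_real, ← hcomplex, ← hs2]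
  calc ‖iteratedDeriv (n + 1) (fun z : ℂ => (z ^ 2 - 1) ^ n) x‖
      ≤ (n + 1).factorial * ((2 * π)⁻¹ * ∫ θ in 0..2 * π, ‖(circleMap x s θ ^ 2 - 1) ^ n‖) /
          s ^ (n + 1) :=
        norm_iteratedDeriv_le_integral_norm_circleMap (n + 1) hs
          (Differentiable.diffContOnCl (by fun_prop))
    _ ≤ (n + 1).factorial * ((2 * π)⁻¹ * ((2 * s) ^ n * (2 * π / (s * √((n / 2 : ℕ) + 1))))) /
          s ^ (n + 1) := by
        gcongr
        exact integral_norm_circleMap_sq_sub_one_pow_le hs (by linarith) n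
    _ = 2 ^ n * (n + 1).factorial / (s ^ 2 * √((n / 2 : ℕ) + 1)) := by
        field_simp
        ring

theorem succ_div_sqrt_div_two_succ_le {n : ℕ} (hn : n ≠ 0) :
    (n + 1 : ℝ) / √((n / 2 : ℕ) + 1) ≤ 3 * √n := by
  have h1 : (1 : ℝ) ≤ n := by exact_mod_cast Nat.one_le_iff_ne_zero.2 hn
  have h2 : (n : ℝ) + 1 ≤ 2 * ((n / 2 : ℕ) + 1) := by
    exact_mod_cast (by omega : n + 1 ≤ 2 * (n / 2 + 1))
  rw [div_le_iff₀ (by positivity), mul_assoc, ← sqrt_mul (Nat.cast_nonneg n),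
    ← div_le_iff₀' (by norm_num), le_sqrt' (by positivity)]
  nlinarith

theorem hasDerivAt_legendre (n : ℕ) (x : ℝ) :
    HasDerivAt (legendre n)
      (1 / (2 ^ n * n.factorial) * iteratedDeriv (n + 1) (fun y : ℝ => (y ^ 2 - 1) ^ n) x) x := by
  have hsmooth : ContDiff ℝ ⊤ fun y : ℝ => (y ^ 2 - 1) ^ n := by fun_prop
  rw [iteratedDeriv_succ]
  exact ((hsmooth.differentiable_iteratedDeriv n (WithTop.coe_lt_top _)).differentiableAt
    |>.hasDerivAt).const_mul _

theorem abs_deriv_legendre_le {n : ℕ} (hn : n ≠ 0) {x : ℝ}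
    (hx : x ∈ Set.Icc (-(1 / 2) : ℝ) (1 / 2)) : |deriv (legendre n) x| ≤ 4 * √n := by
  have hx2 : x ^ 2 ≤ 1 / 4 := by nlinarith [hx.1, hx.2]
  rw [(hasDerivAt_legendre n x).deriv, abs_mul, abs_of_pos (by positivity)]
  calc 1 / (2 ^ n * n.factorial) * |iteratedDeriv (n + 1) (fun y : ℝ => (y ^ 2 - 1) ^ n) x|
      ≤ 1 / (2 ^ n * n.factorial) *
          (2 ^ n * (n + 1).factorial / ((1 - x ^ 2) * √((n / 2 : ℕ) + 1))) := by
        gcongr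
        exact abs_iteratedDeriv_succ_sq_sub_one_pow_le (by linarith) n
    _ = (n + 1) / √((n / 2 : ℕ) + 1) / (1 - x ^ 2) := by
        rw [Nat.factorial_succ]; push_cast; field_simp
    _ ≤ 3 * √n / (3 / 4) := by
        gcongr
        · exact succ_div_sqrt_div_two_succ_le hn
        · linarith
    _ = 4 * √n := by ring

theorem legendre_lipschitz_bound (n : ℕ) (x y : ℝ)
    (hx : x ∈ Set.Icc (-(1 / 2) : ℝ) (1 / 2)) (hy : y ∈ Set.Icc (-(1 / 2) : ℝ) (1 / 2)) :
    |legendre n x - legendre n y| ≤ 4 * Real.sqrt n * |x - y| := by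
  rcases eq_or_ne n 0 with rfl | hn
  · simp [legendre]
  simpa only [Real.norm_eq_abs] using (convex_Icc _ _).norm_image_sub_le_of_norm_deriv_le
    (fun z _ => (hasDerivAt_legendre n z).differentiableAt)
    (fun z hz => (Real.norm_eq_abs _).trans_le (abs_deriv_legendre_le hn hz)) hy hx
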